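/- Let A be a real I×J matrix of full column rank J and B a real K×L matrix of full column rank L. Then the Kronecker product A⊗B (an IK×JL matrix) has full column rank JL, and its coherence satisfies μ(A⊗B) = μ(A)·μ(B). -/
import Mathlib


open Matrix Kronecker

/-- Leverage score of row `i` of a matrix `A`: the `i`-th diagonal entry of the
orthogonal projection matrix `A (Aᵀ A)⁻¹ Aᵀ`. -/
noncomputable def leverage {n d : Type*} [Fintype n] [Fintype d] [DecidableEq d]
    (A : Matrix n d ℝ) (i : n) : ℝ :=
  (A * (Aᵀ * A)⁻¹ * Aᵀ) i i

/-- Coherence of a matrix: the maximum leverage score over all rows. -/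
noncomputable def coherence {n d : Type*} [Fintype n] [Fintype d] [DecidableEq d]
    (A : Matrix n d ℝ) : ℝ :=
  ⨆ i, leverage A i

lemma isUnit_of_rank_eq_card {n : Type*} [Fintype n] [DecidableEq n] (M : Matrix n n ℝ)
    (h : M.rank = Fintype.card n) : IsUnit M := by
  rw [← mulVec_surjective_iff_isUnit]
  have ht : LinearMap.range M.mulVecLin = ⊤ := by
    apply Submodule.eq_top_of_finrank_eq
    rw [← Matrix.rank, h, Module.finrank_pi]
  intro v
  have : v ∈ LinearMap.range M.mulVecLin := ht ▸ Submodule.mem_top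
  obtain ⟨w, hw⟩ := this
  exact ⟨w, hw⟩

lemma gram_isUnit {n d : ℕ} (A : Matrix (Fin n) (Fin d) ℝ) (h : A.rank = d) :
    IsUnit (Aᵀ * A) := by
  apply isUnit_of_rank_eq_card
  rw [rank_transpose_mul_self, h, Fintype.card_fin]

lemma leverage_nonneg {n d : Type*} [Fintype n] [Fintype d] [DecidableEq d]
    (A : Matrix n d ℝ) (hG : IsUnit (Aᵀ * A)) (i : n) : 0 ≤ leverage A i := by
  set P := A * (Aᵀ * A)⁻¹ * Aᵀ with hPdef
  have hsymm : Pᵀ = P := by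
    rw [hPdef, transpose_mul, transpose_mul, transpose_nonsing_inv, transpose_mul,
      transpose_transpose, Matrix.mul_assoc]
  have hP : P * P = P := by
    have hinv : (Aᵀ * A)⁻¹ * (Aᵀ * A) = 1 :=
      nonsing_inv_mul _ ((isUnit_iff_isUnit_det _).mp hG)
    calc P * P = A * ((Aᵀ * A)⁻¹ * (Aᵀ * A)) * ((Aᵀ * A)⁻¹ * Aᵀ) := by
          simp only [hPdef, Matrix.mul_assoc]
      _ = P := by rw [hinv, Matrix.mul_one, hPdef, Matrix.mul_assoc]
  have : leverage A i = ∑ j, P i j * P i j := by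
    have h1 : leverage A i = (P * P) i i := by rw [hP]; rfl
    rw [h1, Matrix.mul_apply]
    refine Finset.sum_congr rfl fun j _ => ?_
    have : P j i = Pᵀ i j := rfl
    rw [this, hsymm]
  rw [this]
  exact Finset.sum_nonneg fun j _ => mul_self_nonneg _

lemma leverage_kronecker {I J K L : ℕ}
    (A : Matrix (Fin I) (Fin J) ℝ) (B : Matrix (Fin K) (Fin L) ℝ)
    (p : Fin I × Fin K) :
    leverage (A ⊗ₖ B) p = leverage A p.1 * leverage B p.2 := by
  unfold leverage
  rw [← kroneckerMap_transpose, ← mul_kronecker_mul, inv_kronecker,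
    ← mul_kronecker_mul, ← mul_kronecker_mul]
  rfl

/-- If `A` has full column rank `J` and `B` has full column rank `L`, then the
Kronecker product `A ⊗ B` has full column rank `J * L` and
`μ(A ⊗ B) = μ(A) * μ(B)`. -/
theorem coherence_kronecker {I J K L : ℕ}
    (A : Matrix (Fin I) (Fin J) ℝ) (B : Matrix (Fin K) (Fin L) ℝ)
    (hA : A.rank = J) (hB : B.rank = L) :
    (A ⊗ₖ B).rank = J * L ∧ coherence (A ⊗ₖ B) = coherence A * coherence B := by
  have hGA : IsUnit (Aᵀ * A) := gram_isUnit A hA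
  have hGB : IsUnit (Bᵀ * B) := gram_isUnit B hB
  constructor
  · -- rank part
    have hgram : (A ⊗ₖ B)ᵀ * (A ⊗ₖ B) = (Aᵀ * A) ⊗ₖ (Bᵀ * B) := by
      rw [← kroneckerMap_transpose, ← mul_kronecker_mul]
    have hu : IsUnit ((A ⊗ₖ B)ᵀ * (A ⊗ₖ B)) := by
      rw [hgram, isUnit_iff_isUnit_det, det_kronecker]
      exact (((isUnit_iff_isUnit_det _).mp hGA).pow _).mul
        (((isUnit_iff_isUnit_det _).mp hGB).pow _)
    have := rank_transpose_mul_self (A ⊗ₖ B)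
    rw [← this, rank_of_isUnit _ hu]
    simp [Fintype.card_prod]
  · -- coherence part
    rcases isEmpty_or_nonempty (Fin I) with hI | hI
    · have hIK : IsEmpty (Fin I × Fin K) := by infer_instance
      unfold coherence
      rw [Real.iSup_of_isEmpty (fun i : Fin I × Fin K => leverage (A ⊗ₖ B) i),
        Real.iSup_of_isEmpty (fun i : Fin I => leverage A i), zero_mul]
    · rcases isEmpty_or_nonempty (Fin K) with hK | hK
      · have hIK : IsEmpty (Fin I × Fin K) := by infer_instance
        unfold coherence
        rw [Real.iSup_of_isEmpty (fun i : Fin I × Fin K => leverage (A ⊗ₖ B) i),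
          Real.iSup_of_isEmpty (fun i : Fin K => leverage B i), mul_zero]
      · have hfA : ∀ i, 0 ≤ leverage A i := leverage_nonneg A hGA
        have hfB : ∀ k, 0 ≤ leverage B k := leverage_nonneg B hGB
        obtain ⟨i0, hi0⟩ := Finite.exists_max (fun i => leverage A i)
        obtain ⟨k0, hk0⟩ := Finite.exists_max (fun k => leverage B k)
        have hsA : coherence A = leverage A i0 :=
          le_antisymm (ciSup_le hi0) (le_ciSup (Finite.bddAbove_range _) i0)
        have hsB : coherence B = leverage B k0 :=
          le_antisymm (ciSup_le hk0) (le_ciSup (Finite.bddAbove_range _) k0)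
        have hsM : coherence (A ⊗ₖ B) = leverage A i0 * leverage B k0 := by
          unfold coherence
          apply le_antisymm
          · apply ciSup_le
            intro p
            rw [leverage_kronecker]
            exact mul_le_mul (hi0 p.1) (hk0 p.2) (hfB p.2) (hfA i0)
          · have := le_ciSup (Finite.bddAbove_range (fun p : Fin I × Fin K =>
              leverage (A ⊗ₖ B) p)) (⟨i0, k0⟩ : Fin I × Fin K)
            rwa [leverage_kronecker] at this
        rw [hsM, hsA, hsB]
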